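/- arXiv:1412.5071 — 2 statements merged into one kernel-verified Lean document; each statement's English description precedes it below -/
import Mathlib

section
/- Let q be a prime power, f ∈ F_q[x] a monic irreducible polynomial of degree d, e and b positive integers, and let J = J_{f^e} ∈ F_q^{de×de} be the Jordan block of f^e. Then the number of matrices V ∈ F_q^{de×b} such that minpoly(J̄·V) = f^e equals (1 − 1/q^{db})·q^{deb}; i.e., for uniformly random V the probability that minpoly(J̄·V) = f^e is 1 − 1/q^{db}, independent of e. -/
open Matrix Polynomial

/-- `p` annihilates the matrix sequence `S`, i.e. `p(S) = 0`:
for every `k`, `∑ i, (coeff p i) • S (i + k) = 0`. -/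
def AnnPoly {F : Type} [Field F] {α β : Type} (p : Polynomial F)
    (S : ℕ → Matrix α β F) : Prop :=
  ∀ k : ℕ, (p.sum fun i a => a • S (i + k)) = 0

open scoped Classical in
/-- The minimal generating polynomial of a matrix sequence: the unique monic
polynomial annihilating `S` that divides every annihilator of `S`
(`0` if no such polynomial exists). -/
noncomputable def seqMinpoly {F : Type} [Field F] {α β : Type}
    (S : ℕ → Matrix α β F) : Polynomial F :=
  if h : ∃ p : Polynomial F, p.Monic ∧ AnnPoly p S ∧ ∀ g : Polynomial F, AnnPoly g S → p ∣ g
  then h.choose else 0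

/-- `pmp F b A` : the fraction of pairs `(U, V)` for which the projected sequence
`(U * A^k * V)_k` has the same minimal polynomial as the sequence `(A^k)_k`. -/
noncomputable def pmp (F : Type) [Field F] [Fintype F] (b : ℕ)
    {ι : Type} [Fintype ι] [DecidableEq ι] (A : Matrix ι ι F) : ℚ :=
  (Nat.card {UV : Matrix (Fin b) ι F × Matrix ι (Fin b) F //
      seqMinpoly (fun k => UV.1 * A ^ k * UV.2) = seqMinpoly (fun k => A ^ k)} : ℚ) /
  (Nat.card (Matrix (Fin b) ι F × Matrix ι (Fin b) F) : ℚ)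

/-- The companion matrix of a monic polynomial `f` of degree `d`:
ones on the subdiagonal, last column `(-f_0, …, -f_{d-1})ᵀ`. -/
def companion {F : Type} [Field F] (d : ℕ) (f : Polynomial F) :
    Matrix (Fin d) (Fin d) F :=
  Matrix.of fun i j => (if (i : ℕ) = (j : ℕ) + 1 then 1 else 0) +
    (if (j : ℕ) = d - 1 then -f.coeff (i : ℕ) else 0)

/-- The Jordan block `J_{f^e}` of `f^e` (`f` of degree `d`): `e` diagonal blocks `C_f`
and identity blocks on the first block subdiagonal. -/
def jordanBlock {F : Type} [Field F] (d e : ℕ) (f : Polynomial F) :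
    Matrix (Fin e × Fin d) (Fin e × Fin d) F :=
  Matrix.of fun p q =>
    if p.1 = q.1 then companion d f p.2 q.2
    else if (p.1 : ℕ) = (q.1 : ℕ) + 1 then (if p.2 = q.2 then 1 else 0) else 0

/-!
Write `J = A + N` with `A = I ⊗ C_f` and `N = S ⊗ I`, `S` the nilpotent shift on `e` blocks, so
that `A` and `N` commute, `N^e = 0`, and `f(A) = 0` because `C_f` is the matrix of multiplication by
`x` on `F[x]/(f)`. In the commutative algebra they generate,
`f(A + N) = N (f'(A) + N r)`, hence `f(J)^e = 0` and `f(J)^(e-1) = f'(A)^(e-1) N^(e-1)`; over the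
perfect field `F_q` the irreducible `f` is separable, so `f'(A)` is invertible. The polynomials
annihilating the Krylov sequence `(J^k V)_k` form a principal ideal containing `f^e`, so
`minpoly(J̄·V) = f^e` iff `f(J)^(e-1) V ≠ 0`, iff `N^(e-1) V ≠ 0`, iff the first block row of `V`
is nonzero: `(q^(db) - 1) q^((e-1)db)` matrices.
-/

open Kronecker

theorem isUnit_aeval_of_isCoprime {R A : Type*} [CommSemiring R] [Semiring A] [Algebra R A]
    {p q : R[X]} (h : IsCoprime p q) {a : A} (ha : aeval a p = 0) : IsUnit (aeval a q) := by
  obtain ⟨u, v, huv⟩ := h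
  have hvq : aeval a v * aeval a q = 1 := by
    simpa [ha] using congrArg (aeval a) huv
  have hqv : aeval a q * aeval a v = 1 := by
    rwa [← map_mul, mul_comm, map_mul]
  exact ⟨⟨_, _, hqv, hvq⟩, rfl⟩

theorem aeval_add_pow_of_aeval_eq_zero {R A : Type*} [CommRing R] [CommRing A] [Algebra R A]
    {p : R[X]} {a n : A} (hp : aeval a p = 0) {e : ℕ} (hn : n ^ (e + 1) = 0) :
    aeval (a + n) (p ^ (e + 1)) = 0 ∧
      aeval (a + n) (p ^ e) = aeval a (derivative p) ^ e * n ^ e := by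
  obtain ⟨r, hr⟩ := (p.map (algebraMap R A)).binomExpansion a n
  simp only [eval_map_algebraMap, derivative_map, hp, zero_add] at hr
  have hfac : aeval (a + n) p = n * (aeval a (derivative p) + r * n) := by rw [hr]; ring
  obtain ⟨w, hw⟩ := sub_dvd_pow_sub_pow (aeval a (derivative p) + r * n) (aeval a (derivative p)) e
  rw [map_pow, map_pow, hfac, mul_pow, mul_pow, hn, zero_mul]
  exact ⟨rfl, by linear_combination n ^ e * hw + r * w * hn⟩

open scoped IsMulCommutative in
theorem Commute.aeval_add_pow_of_aeval_eq_zero {R A : Type*} [CommRing R] [Ring A] [Algebra R A]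
    {p : R[X]} {a n : A} (h : Commute a n) (hp : aeval a p = 0) {e : ℕ} (hn : n ^ (e + 1) = 0) :
    aeval (a + n) (p ^ (e + 1)) = 0 ∧
      aeval (a + n) (p ^ e) = aeval a (derivative p) ^ e * n ^ e := by
  set B := Algebra.adjoin R {a, n}
  have : IsMulCommutative B := Algebra.isMulCommutative_adjoin R <| by
    rintro x (rfl | rfl) y (rfl | rfl)
    exacts [rfl, h.eq, h.eq.symm, rfl]
  let a' : B := ⟨a, Algebra.subset_adjoin (by simp)⟩
  let n' : B := ⟨n, Algebra.subset_adjoin (by simp)⟩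
  have hp' : aeval a' p = 0 := Subtype.ext (by rw [aeval_subalgebra_coe]; exact hp)
  have hn' : n' ^ (e + 1) = 0 := Subtype.ext (by simpa using hn)
  obtain ⟨h1, h2⟩ := _root_.aeval_add_pow_of_aeval_eq_zero hp' hn'
  exact ⟨by simpa [aeval_subalgebra_coe, a', n'] using congrArg Subtype.val h1,
    by simpa [aeval_subalgebra_coe, a', n'] using congrArg Subtype.val h2⟩

theorem Ideal.eq_span_pow_succ_of_mem_of_notMem {R : Type*} [CommRing R] [IsDomain R]
    [IsPrincipalIdealRing R] {p : R} (hp : Prime p) {I : Ideal R} {n : ℕ}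
    (hmem : p ^ (n + 1) ∈ I) (hnot : p ^ n ∉ I) : I = Ideal.span {p ^ (n + 1)} := by
  obtain ⟨g, rfl⟩ := (IsPrincipalIdealRing.principal I).principal
  rw [Ideal.submodule_span_eq, Ideal.mem_span_singleton] at hmem hnot
  obtain ⟨i, hi, hg⟩ := (dvd_prime_pow hp _).1 hmem
  obtain rfl : i = n + 1 := by
    by_contra hne
    exact hnot (hg.dvd.trans (pow_dvd_pow p (by omega)))
  exact Ideal.span_singleton_eq_span_singleton.2 hg

section Companion

variable {F : Type} [Field F] {f : F[X]}

theorem companion_eq_leftMulMatrix (hf : f.Monic) :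
    companion f.natDegree f =
      Algebra.leftMulMatrix (AdjoinRoot.powerBasis hf.ne_zero).basis (AdjoinRoot.root f) := by
  rw [← AdjoinRoot.powerBasis_gen hf.ne_zero, PowerBasis.leftMulMatrix, PowerBasis.minpolyGen_eq,
    AdjoinRoot.minpoly_powerBasis_gen_of_monic hf]
  ext i j
  show _ = if (j : ℕ) + 1 = f.natDegree then -f.coeff i else if (i : ℕ) = j + 1 then 1 else 0
  simp only [companion, Matrix.of_apply]
  have := j.isLt
  split_ifs <;> first | omega | simp

theorem aeval_companion_self (hf : f.Monic) : aeval (companion f.natDegree f) f = 0 := by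
  have h := aeval_algHom_apply (Algebra.leftMulMatrix (AdjoinRoot.powerBasis hf.ne_zero).basis)
    (AdjoinRoot.root f) f
  rw [AdjoinRoot.aeval_eq, AdjoinRoot.mk_self, map_zero] at h
  rw [companion_eq_leftMulMatrix hf]
  exact h

end Companion

section Kronecker

variable {R : Type*} [CommSemiring R] {m n : Type*} [Fintype m] [DecidableEq m] [Fintype n]
  [DecidableEq n]

theorem Matrix.kronecker_pow (A : Matrix m m R) (B : Matrix n n R) (k : ℕ) :
    (A ⊗ₖ B) ^ k = (A ^ k) ⊗ₖ (B ^ k) := by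
  induction k with
  | zero => simp only [pow_zero, Matrix.one_kronecker_one]
  | succ k ih => rw [pow_succ, ih, ← Matrix.mul_kronecker_mul, pow_succ, pow_succ]

theorem aeval_one_kronecker (C : Matrix n n R) (p : R[X]) :
    aeval ((1 : Matrix m m R) ⊗ₖ C) p = 1 ⊗ₖ aeval C p := by
  induction p using Polynomial.induction_on' with
  | add p q hp hq => rw [map_add, map_add, hp, hq, Matrix.kronecker_add]
  | monomial k a =>
    simp only [aeval_monomial, Matrix.kronecker_pow, one_pow, Algebra.algebraMap_eq_smul_one,
      smul_mul_assoc, one_mul, Matrix.kronecker_smul]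

theorem commute_one_kronecker_kronecker_one (A : Matrix m m R) (B : Matrix n n R) :
    Commute ((1 : Matrix m m R) ⊗ₖ B) (A ⊗ₖ (1 : Matrix n n R)) := by
  simp only [Commute, SemiconjBy, ← Matrix.mul_kronecker_mul, Matrix.one_mul, Matrix.mul_one]

end Kronecker

def shiftMatrix (R : Type*) [Zero R] [One R] (n : ℕ) : Matrix (Fin n) (Fin n) R :=
  Matrix.of fun i j => if (i : ℕ) = j + 1 then 1 else 0

section Shift

variable {R : Type*} [Semiring R] {n : ℕ}

theorem shiftMatrix_pow_apply (k : ℕ) (i j : Fin n) :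
    (shiftMatrix R n ^ k) i j = if (i : ℕ) = j + k then 1 else 0 := by
  induction k generalizing i with
  | zero => simp [Matrix.one_apply, Fin.ext_iff]
  | succ k ih =>
    rw [pow_succ', Matrix.mul_apply]
    simp only [ih]
    simp only [shiftMatrix, Matrix.of_apply, ite_mul, one_mul, zero_mul]
    rcases i with ⟨_ | i, hi⟩
    · simp
    · rw [Finset.sum_eq_single ⟨i, by omega⟩]
      · simp only [if_true]
        split_ifs <;> first | rfl | omega
      · intro l _ hl
        rw [if_neg fun h => hl (Fin.ext (by simp at h ⊢; omega))]
      · simp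

theorem shiftMatrix_pow_self : shiftMatrix R n ^ n = 0 := by
  ext i j
  rw [shiftMatrix_pow_apply, if_neg (by omega), Matrix.zero_apply]

theorem shiftMatrix_pow_kronecker_one_mul_eq_zero_iff {ι κ : Type*} [Fintype ι] [DecidableEq ι]
    (V : Matrix (Fin (n + 1) × ι) κ R) :
    ((shiftMatrix R (n + 1) ^ n) ⊗ₖ (1 : Matrix ι ι R)) * V = 0 ↔ ∀ i, V (0, i) = 0 := by
  have happly : ∀ x i c, (((shiftMatrix R (n + 1) ^ n) ⊗ₖ (1 : Matrix ι ι R)) * V) (x, i) c =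
      if (x : ℕ) = n then V (0, i) c else 0 := by
    intro x i c
    simp only [Matrix.mul_apply, Fintype.sum_prod_type, Matrix.kronecker_apply,
      shiftMatrix_pow_apply, Matrix.one_apply, ite_mul, one_mul, zero_mul, mul_ite, mul_zero,
      mul_one, Finset.sum_ite_eq, Finset.mem_univ, if_true]
    rw [Fintype.sum_eq_single 0 fun y hy => if_neg fun h =>
      hy (Fin.ext (by have := x.isLt; rw [Fin.val_zero]; omega))]
    simp
  constructor
  · intro h i
    ext c
    simpa [happly] using congrFun (congrFun h (Fin.last n, i)) c
  · intro h
    ext ⟨x, i⟩ c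
    simp [happly, h]

end Shift

theorem jordanBlock_eq {F : Type} [Field F] (d e : ℕ) (f : F[X]) :
    jordanBlock d e f =
      1 ⊗ₖ companion d f + shiftMatrix F e ⊗ₖ (1 : Matrix (Fin d) (Fin d) F) := by
  ext ⟨i, p⟩ ⟨j, q⟩
  simp only [jordanBlock, shiftMatrix, Matrix.of_apply, Matrix.add_apply, Matrix.kronecker_apply,
    Matrix.one_apply]
  by_cases hij : i = j
  · subst hij
    simp
  · simp only [hij, if_false, zero_mul, zero_add, mul_ite, mul_one, mul_zero]
    split_ifs <;> rfl

section SeqMinpoly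

variable {F : Type} [Field F] {α β : Type}

theorem seqMinpoly_eq {S : ℕ → Matrix α β F} {p : F[X]} (hp : p.Monic) (hann : AnnPoly p S)
    (hdvd : ∀ g, AnnPoly g S → p ∣ g) : seqMinpoly S = p := by
  have hex : ∃ q : F[X], q.Monic ∧ AnnPoly q S ∧ ∀ g, AnnPoly g S → q ∣ g := ⟨p, hp, hann, hdvd⟩
  obtain ⟨hq, hqann, hqdvd⟩ := hex.choose_spec
  rw [seqMinpoly, dif_pos hex]
  exact eq_of_monic_of_associated hq hp (associated_of_dvd_dvd (hqdvd p hann) (hdvd _ hqann))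

theorem seqMinpoly_dvd {S : ℕ → Matrix α β F} {g : F[X]} (h : seqMinpoly S ≠ 0)
    (hg : AnnPoly g S) : seqMinpoly S ∣ g := by
  unfold seqMinpoly at *
  split_ifs at * with hex
  · exact hex.choose_spec.2.2 g hg
  · exact absurd rfl h

variable [Fintype α] [DecidableEq α]

theorem annPoly_krylov_iff (J : Matrix α α F) (V : Matrix α β F) (p : F[X]) :
    AnnPoly p (fun k => J ^ k * V) ↔ aeval J p * V = 0 := by
  have hsum : ∀ k, (p.sum fun i a => a • (J ^ (i + k) * V)) = aeval J p * (J ^ k * V) := by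
    intro k
    simp only [aeval_def, eval₂_eq_sum, Polynomial.sum_def, Matrix.sum_mul, pow_add,
      Matrix.mul_assoc, Algebra.algebraMap_eq_smul_one, Matrix.smul_mul, Matrix.one_mul]
  have hcomm : ∀ k, aeval J p * J ^ k = J ^ k * aeval J p := fun k => by
    simpa using ((Commute.all p (X ^ k)).map (aeval J)).eq
  refine ⟨fun h => ?_, fun h k => ?_⟩
  · simpa only [hsum, pow_zero, Matrix.one_mul] using h 0
  · rw [hsum, ← Matrix.mul_assoc, hcomm, Matrix.mul_assoc, h, Matrix.mul_zero]

def krylovAnnIdeal (J : Matrix α α F) (V : Matrix α β F) : Ideal F[X] where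
  carrier := {p | aeval J p * V = 0}
  add_mem' {p q} hp hq := by simp_all [Matrix.add_mul]
  zero_mem' := by simp
  smul_mem' c p hp := by simp_all [Matrix.mul_assoc]

theorem mem_krylovAnnIdeal {J : Matrix α α F} {V : Matrix α β F} {p : F[X]} :
    p ∈ krylovAnnIdeal J V ↔ aeval J p * V = 0 := Iff.rfl

theorem seqMinpoly_krylov_eq_pow_iff {J : Matrix α α F} {V : Matrix α β F} {f : F[X]}
    (hf : Irreducible f) (hfm : f.Monic) {e : ℕ} (htop : aeval J (f ^ (e + 1)) * V = 0) :
    seqMinpoly (fun k => J ^ k * V) = f ^ (e + 1) ↔ aeval J (f ^ e) * V ≠ 0 := by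
  constructor
  · intro h hzero
    have hdvd := seqMinpoly_dvd (h ▸ (hfm.pow _).ne_zero) ((annPoly_krylov_iff J V _).2 hzero)
    rw [h, pow_dvd_pow_iff hfm.ne_zero hf.not_isUnit] at hdvd
    omega
  · intro hne
    have hI := Ideal.eq_span_pow_succ_of_mem_of_notMem hf.prime
      (mem_krylovAnnIdeal.2 htop) (mt mem_krylovAnnIdeal.1 hne)
    refine seqMinpoly_eq (hfm.pow _) ((annPoly_krylov_iff J V _).2 htop) fun g hg => ?_
    have hgI : g ∈ krylovAnnIdeal J V := mem_krylovAnnIdeal.2 ((annPoly_krylov_iff J V g).1 hg)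
    rwa [hI, Ideal.mem_span_singleton] at hgI

end SeqMinpoly

theorem card_matrix_not_forall_row_eq_zero (F : Type*) [Zero F] [Fintype F] (n : ℕ)
    (ι κ : Type*) [Fintype ι] [Fintype κ] :
    Nat.card {V : Matrix (Fin (n + 1) × ι) κ F // ¬ ∀ i, V (0, i) = 0} =
      (Fintype.card F ^ (Fintype.card ι * Fintype.card κ) - 1) *
        Fintype.card F ^ (n * (Fintype.card ι * Fintype.card κ)) := by
  classical
  let Φ : Matrix (Fin (n + 1) × ι) κ F ≃ (ι → κ → F) × (Fin n → ι → κ → F) :=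
    (Equiv.curry _ _ _).trans (Fin.consEquiv fun _ => ι → κ → F).symm
  have hΦ : ∀ V, (¬ ∀ i, V (0, i) = 0) ↔ (Φ V).1 ≠ 0 := fun V => not_congr funext_iff.symm
  rw [Nat.card_congr ((Φ.subtypeEquiv (q := fun x => x.1 ≠ 0) hΦ).trans
      (Equiv.prodSubtypeFstEquivSubtypeProd (p := fun x => x ≠ 0))),
    Nat.card_prod, Nat.card_eq_fintype_card, Fintype.card_subtype_compl, Fintype.card_subtype_eq]
  simp only [Nat.card_eq_fintype_card, Fintype.card_pi, Finset.prod_const, Finset.card_univ,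
    Fintype.card_fin]
  rw [← pow_mul, ← pow_mul, mul_comm (Fintype.card κ), mul_comm n]

theorem stmt4_general (F : Type) [Field F] [Fintype F] (b e : ℕ) (he : 0 < e)
    (f : Polynomial F) (hmonic : f.Monic) (hirr : Irreducible f)
    (d : ℕ) (hd : d = f.natDegree) :
    (Nat.card {V : Matrix (Fin e × Fin d) (Fin b) F //
        seqMinpoly (fun k => (jordanBlock d e f) ^ k * V) = f ^ e} : ℚ) =
      (1 - 1 / (Fintype.card F : ℚ) ^ (d * b)) * (Fintype.card F : ℚ) ^ (d * e * b) := by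
  subst hd
  obtain ⟨e, rfl⟩ := Nat.exists_eq_add_one.2 he
  rw [jordanBlock_eq]
  set A := (1 : Matrix (Fin (e + 1)) (Fin (e + 1)) F) ⊗ₖ companion f.natDegree f
  set N := shiftMatrix F (e + 1) ⊗ₖ (1 : Matrix (Fin f.natDegree) (Fin f.natDegree) F)
  have hA : aeval A f = 0 := by
    rw [aeval_one_kronecker, aeval_companion_self hmonic, Matrix.kronecker_zero]
  have hN : N ^ (e + 1) = 0 := by
    rw [Matrix.kronecker_pow, shiftMatrix_pow_self, Matrix.zero_kronecker]
  obtain ⟨htop, hpred⟩ :=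
    (commute_one_kronecker_kronecker_one _ _).aeval_add_pow_of_aeval_eq_zero hA hN
  have hunit := (isUnit_aeval_of_isCoprime (PerfectField.separable_of_irreducible hirr) hA).pow e
  have := hunit.invertible
  have key : ∀ V : Matrix (Fin (e + 1) × Fin f.natDegree) (Fin b) F,
      seqMinpoly (fun k => (A + N) ^ k * V) = f ^ (e + 1) ↔ ¬ ∀ i, V (0, i) = 0 := fun V => by
    rw [seqMinpoly_krylov_eq_pow_iff hirr hmonic (by rw [htop, Matrix.zero_mul]), hpred,
      Matrix.mul_assoc, Ne, (Matrix.mul_right_injective_of_invertible _).eq_iff'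
      (Matrix.mul_zero _), Matrix.kronecker_pow, one_pow,
      shiftMatrix_pow_kronecker_one_mul_eq_zero_iff]
  rw [Nat.card_congr (Equiv.subtypeEquivRight key), card_matrix_not_forall_row_eq_zero,
    Fintype.card_fin, Fintype.card_fin]
  have hq : 1 ≤ Fintype.card F ^ (f.natDegree * b) := Nat.one_le_pow _ _ Fintype.card_pos
  have hq0 : (Fintype.card F : ℚ) ≠ 0 := by exact_mod_cast Fintype.card_ne_zero
  push_cast [hq]
  field_simp
  ring

/-- For the Jordan block `J = J_{f^e}` of a monic irreducible `f` of degree `d`,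
the number of `V ∈ F^{de×b}` with `minpoly(J̄·V) = f^e` is `(1 - 1/q^{db})·q^{deb}`. -/
theorem stmt4 (F : Type) [Field F] [Fintype F] (b e : ℕ) (hb : 0 < b) (he : 0 < e)
    (f : Polynomial F) (hmonic : f.Monic) (hirr : Irreducible f)
    (d : ℕ) (hd : d = f.natDegree) :
    (Nat.card {V : Matrix (Fin e × Fin d) (Fin b) F //
        seqMinpoly (fun k => (jordanBlock d e f) ^ k * V) = f ^ e} : ℚ) =
      (1 - 1 / (Fintype.card F : ℚ) ^ (d * b)) * (Fintype.card F : ℚ) ^ (d * e * b) :=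
  stmt4_general F b e he f hmonic hirr d hd
end

section
/- Let q be a prime power, f ∈ F_q[x] a monic irreducible polynomial of degree d, b and s positive integers, and A = ⊕_{i=1}^s C_f ∈ F_q^{n×n} with n = sd. Then P(A) = 1 − Q_{q^d, b, s}(0) ≥ 1 − Q_{q^d, b, 1}(0), where Q_{q^d, b, s}(0) is the probability that a sum of s independent uniformly random rank-one outer products u_i v_i^T with u_i, v_i ∈ (F_{q^d})^b is the zero matrix. -/
/-!
Let `L = F[x]/(f)`, a field with `q^d` elements, and `θ` the class of `x`. In the power basis
of `L`, `C_f` is the matrix of multiplication by `θ`, so `A = ⊕ C_f` is the image of `θ` under an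
`F`-algebra map `L → F^{n×n}`. Hence `f(A) = 0`, and since `f` is irreducible the minimal
polynomial of `U·Ā·V` is `f` unless the whole sequence vanishes (and that of `Ā` is `f`).
For a nonzero functional `ℓ` on `L` the pairing `ℓ(x y)` is nondegenerate; reading the rows of
`U` in the `ℓ`-dual basis and the columns of `V` in the power basis gives `P ∈ L^{b×s}`,
`Q ∈ L^{s×b}` with `(U A^k V)_{ac} = ℓ(θ^k (P Q)_{ac})`. So the sequence vanishes iff
`P Q = ∑ᵢ uᵢ vᵢᵀ = 0`, and `(U, V) ↦ (P, Q)` is a bijection. The inequality comes from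
conditioning on the last `s - 1` outer products: no fibre `{(u, v) | u vᵀ = M}` is larger than
the one over `M = 0`.
-/

open Matrix Polynomial

/-- `Q_{Q,b,t}(0)`: the fraction of tuples `(u₁, v₁, …, u_t, v_t)` of vectors in
`K^b` (`K` the field of `Q` elements) whose sum of outer products `∑ᵢ uᵢvᵢᵀ` is the
zero matrix. -/
noncomputable def Qzero (K : Type) [Field K] [Fintype K] (b t : ℕ) : ℚ :=
  (Nat.card {w : Fin t → (Fin b → K) × (Fin b → K) //
      ∑ i : Fin t, Matrix.vecMulVec (w i).1 (w i).2 = 0} : ℚ) /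
    (Fintype.card K : ℚ) ^ (2 * b * t)

section SeqMinpoly

variable {F : Type} [Field F] {α β : Type}

noncomputable def seqShift (F α β : Type) [Field F] :
    Module.End F (ℕ → Matrix α β F) :=
  LinearMap.funLeft F _ Nat.succ

theorem seqShift_pow_apply (i : ℕ) (S : ℕ → Matrix α β F) (k : ℕ) :
    (seqShift F α β ^ i) S k = S (i + k) := by
  induction i generalizing S with
  | zero => simp
  | succ i ih =>
    rw [pow_succ, Module.End.mul_apply, ih, add_right_comm]
    rfl

theorem annPoly_iff_aeval_seqShift {p : F[X]} {S : ℕ → Matrix α β F} :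
    AnnPoly p S ↔ aeval (seqShift F α β) p S = 0 := by
  rw [aeval_def, eval₂_eq_sum, funext_iff]
  refine forall_congr' fun k => ?_
  simp [Polynomial.sum_def, LinearMap.sum_apply, Finset.sum_apply, seqShift_pow_apply,
    Algebra.algebraMap_eq_smul_one]

noncomputable def annPolyIdeal (S : ℕ → Matrix α β F) : Ideal F[X] :=
  (Ideal.torsionOf (Module.End F (ℕ → Matrix α β F)) _ S).comap (aeval (seqShift F α β))

theorem mem_annPolyIdeal {p : F[X]} {S : ℕ → Matrix α β F} :
    p ∈ annPolyIdeal S ↔ AnnPoly p S := by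
  rw [annPolyIdeal, Ideal.mem_comap, Ideal.mem_torsionOf_iff, annPoly_iff_aeval_seqShift]
  rfl

theorem annPoly_zero_right (p : F[X]) : AnnPoly p (0 : ℕ → Matrix α β F) := by
  simp [AnnPoly, Polynomial.sum_def]

theorem eq_zero_of_annPoly_one {S : ℕ → Matrix α β F} (h : AnnPoly 1 S) : S = 0 := by
  funext k
  have hk := h k
  rw [← C_1, sum_C_index (by simp)] at hk
  simpa using hk

theorem annPoly_mul_pow_mul {ι : Type} [Fintype ι] [DecidableEq ι] {p : F[X]}
    {M : Matrix ι ι F} (hM : aeval M p = 0) (U : Matrix α ι F) (V : Matrix ι β F) :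
    AnnPoly p (fun k => U * M ^ k * V) := by
  intro k
  have h : aeval M p = p.sum fun i a => a • M ^ i := by
    rw [aeval_def, eval₂_eq_sum]
    simp [Algebra.smul_def]
  calc (p.sum fun i a => a • (U * M ^ (i + k) * V)) = U * aeval M p * M ^ k * V := by
        simp [h, Polynomial.sum_def, Matrix.mul_sum, Matrix.sum_mul, pow_add, Matrix.mul_assoc]
    _ = 0 := by simp [hM]

theorem annPoly_pow {ι : Type} [Fintype ι] [DecidableEq ι] {p : F[X]} {M : Matrix ι ι F}
    (hM : aeval M p = 0) : AnnPoly p (fun k => M ^ k) := by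
  simpa using annPoly_mul_pow_mul hM (1 : Matrix ι ι F) (1 : Matrix ι ι F)

theorem seqMinpoly_eq_of_forall_dvd {p : F[X]} {S : ℕ → Matrix α β F} (hp : p.Monic)
    (hann : AnnPoly p S) (hdvd : ∀ g, AnnPoly g S → p ∣ g) : seqMinpoly S = p := by
  have hex : ∃ q : F[X], q.Monic ∧ AnnPoly q S ∧ ∀ g, AnnPoly g S → q ∣ g :=
    ⟨p, hp, hann, hdvd⟩
  rw [seqMinpoly, dif_pos hex]
  obtain ⟨hq, hq_ann, hq_dvd⟩ := hex.choose_spec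
  exact eq_of_monic_of_associated hq hp (associated_of_dvd_dvd (hq_dvd p hann) (hdvd _ hq_ann))

/-- An irreducible annihilator generates the maximal ideal `(p)`, so the annihilator ideal is
either `(p)` or everything. -/
theorem seqMinpoly_eq_iff_ne_zero {p : F[X]} {S : ℕ → Matrix α β F} (hp : p.Monic)
    (hirr : Irreducible p) (hann : AnnPoly p S) : seqMinpoly S = p ↔ S ≠ 0 := by
  constructor
  · rintro hS rfl
    have h_one : seqMinpoly (0 : ℕ → Matrix α β F) = 1 :=
      seqMinpoly_eq_of_forall_dvd monic_one (annPoly_zero_right 1) fun g _ => one_dvd g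
    exact hirr.not_isUnit (hS ▸ h_one ▸ isUnit_one)
  · intro hS
    refine seqMinpoly_eq_of_forall_dvd hp hann fun g hg => ?_
    have h_ne_top : annPolyIdeal S ≠ ⊤ := fun h_top =>
      hS (eq_zero_of_annPoly_one (mem_annPolyIdeal.1 (h_top ▸ Submodule.mem_top)))
    have h_eq := (PrincipalIdealRing.isMaximal_of_irreducible hirr).eq_of_le h_ne_top
      ((Ideal.span_singleton_le_iff_mem _).2 (mem_annPolyIdeal.2 hann))
    have hg_mem : g ∈ F[X] ∙ p := h_eq ▸ mem_annPolyIdeal.2 hg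
    exact Ideal.mem_span_singleton.1 hg_mem

end SeqMinpoly

section BlockLeftMul

def Matrix.blockDiagonalAlgHom (R m o : Type) [CommSemiring R] [Fintype m] [DecidableEq m]
    [Fintype o] [DecidableEq o] :
    (o → Matrix m m R) →ₐ[R] Matrix (m × o) (m × o) R :=
  { blockDiagonalRingHom m o R with
    commutes' := fun r => by
      simp [Pi.algebraMap_def, Matrix.algebraMap_eq_diagonal, Matrix.blockDiagonal_diagonal] }

variable {F L : Type} [Field F] [Ring L] [Algebra F L] {ι : Type} [Fintype ι] [DecidableEq ι]

noncomputable def blockLeftMulMatrix (B : Module.Basis ι F L) (n : Type) [Fintype n]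
    [DecidableEq n] : L →ₐ[F] Matrix (ι × n) (ι × n) F :=
  (Matrix.blockDiagonalAlgHom F ι n).comp ((Pi.constAlgHom F n _).comp (Algebra.leftMulMatrix B))

theorem blockLeftMulMatrix_apply (B : Module.Basis ι F L) (n : Type) [Fintype n]
    [DecidableEq n] (x : L) :
    blockLeftMulMatrix B n x = blockDiagonal fun _ => Algebra.leftMulMatrix B x :=
  rfl

theorem companion_minpoly_eq_leftMulMatrix (pb : PowerBasis F L) :
    companion pb.dim (minpoly F pb.gen) = Algebra.leftMulMatrix pb.basis pb.gen := by
  rw [pb.leftMulMatrix, pb.minpolyGen_eq]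
  ext i j
  simp only [companion, Matrix.of_apply]
  split_ifs <;> first | omega | simp

end BlockLeftMul

section MulDual

variable {F L : Type} [Field F] [Field L] [Algebra F L] (ℓ : Module.Dual F L)

theorem eq_zero_of_forall_dual_mul (hℓ : ℓ ≠ 0) {z : L} (h : ∀ y, ℓ (y * z) = 0) : z = 0 := by
  by_contra hz
  obtain ⟨w, hw⟩ := DFunLike.ne_iff.1 hℓ
  exact hw (by simpa [hz] using h (w * z⁻¹))

noncomputable def mulDualForm : LinearMap.BilinForm F L :=
  (LinearMap.mul F L).compr₂ ℓ

theorem mulDualForm_nondegenerate (hℓ : ℓ ≠ 0) : (mulDualForm ℓ).Nondegenerate :=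
  ⟨fun x hx => eq_zero_of_forall_dual_mul ℓ hℓ fun y => by rw [mul_comm]; exact hx y,
    fun y hy => eq_zero_of_forall_dual_mul ℓ hℓ hy⟩

theorem eq_zero_of_forall_dual_pow_mul (hℓ : ℓ ≠ 0) (pb : PowerBasis F L) {z : L}
    (h : ∀ k : ℕ, ℓ (pb.gen ^ k * z) = 0) : z = 0 := by
  have h_zero : ℓ ∘ₗ LinearMap.mulRight F z = 0 :=
    pb.basis.ext fun j => by simpa [pb.basis_eq_pow] using h j
  exact eq_zero_of_forall_dual_mul ℓ hℓ fun y => LinearMap.congr_fun h_zero y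

variable {ι : Type} [Fintype ι] [DecidableEq ι]

noncomputable def mulDualBasis (hℓ : ℓ ≠ 0) (B : Module.Basis ι F L) : Module.Basis ι F L :=
  (mulDualForm ℓ).dualBasis (mulDualForm_nondegenerate ℓ hℓ) B

theorem dual_mulDualBasis_mul (hℓ : ℓ ≠ 0) (B : Module.Basis ι F L) (j : ι) (y : L) :
    ℓ (mulDualBasis ℓ hℓ B j * y) = B.repr y j := by
  have h : mulDualForm ℓ (mulDualBasis ℓ hℓ B j) = B.coord j :=
    B.ext fun j' => by
      rw [mulDualBasis, LinearMap.BilinForm.apply_dualBasis_left, B.coord_apply, B.repr_self,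
        Finsupp.single_apply]
  exact LinearMap.congr_fun h y

end MulDual

section BlockPacking

variable {F L : Type} [Field F] [CommRing L] [Algebra F L] {ι : Type} [Fintype ι]

noncomputable def rowBlocksEquiv (G : Module.Basis ι F L) (m n : Type) :
    Matrix m (ι × n) F ≃ Matrix m n L where
  toFun U := of fun a i => G.equivFun.symm fun j => U a (j, i)
  invFun P := of fun a x => G.equivFun (P a x.2) x.1
  left_inv U := by ext a x; simp only [of_apply, LinearEquiv.apply_symm_apply]
  right_inv P := by ext a i; simp only [of_apply, LinearEquiv.symm_apply_apply]

noncomputable def colBlocksEquiv (G : Module.Basis ι F L) (m n : Type) :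
    Matrix (ι × n) m F ≃ Matrix n m L :=
  (Matrix.transposeAddEquiv _ _ F).toEquiv.trans
    ((rowBlocksEquiv G m n).trans (Matrix.transposeAddEquiv _ _ L).toEquiv)

theorem rowBlocksEquiv_apply (G : Module.Basis ι F L) {m n : Type} (U : Matrix m (ι × n) F)
    (a : m) (i : n) : rowBlocksEquiv G m n U a i = ∑ j, U a (j, i) • G j := by
  simp [rowBlocksEquiv, Module.Basis.equivFun_symm_apply]

theorem colBlocksEquiv_apply (G : Module.Basis ι F L) {m n : Type} (V : Matrix (ι × n) m F)
    (i : n) (c : m) : colBlocksEquiv G m n V i c = ∑ j, V (j, i) c • G j := by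
  simp [colBlocksEquiv, rowBlocksEquiv_apply]

theorem mul_blockLeftMulMatrix_mul_apply [DecidableEq ι] (ℓ : Module.Dual F L)
    {B D : Module.Basis ι F L} (hD : ∀ j y, ℓ (D j * y) = B.repr y j) {m n : Type} [Fintype n]
    [DecidableEq n]
    (U : Matrix m (ι × n) F) (V : Matrix (ι × n) m F) (x : L) (a c : m) :
    (U * blockLeftMulMatrix B n x * V) a c =
      ℓ (x * (rowBlocksEquiv D m n U * colBlocksEquiv B m n V) a c) := by
  simp only [blockLeftMulMatrix_apply, Matrix.mul_apply, rowBlocksEquiv_apply,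
    colBlocksEquiv_apply, Fintype.sum_prod_type, Matrix.blockDiagonal_apply, Finset.sum_mul,
    Finset.mul_sum, map_sum]
  have h_term : ∀ j j' (u v : F),
      ℓ (x * (u • D j * v • B j')) = u * Algebra.leftMulMatrix B x j j' * v := by
    intro j j' u v
    rw [Algebra.leftMulMatrix_eq_repr_mul, ← hD, smul_mul_smul_comm, mul_smul_comm, map_smul,
      mul_left_comm, smul_eq_mul]
    ring
  simp only [h_term, mul_ite, ite_mul, mul_zero, zero_mul, Finset.sum_ite_eq', Finset.mem_univ,
    if_true]
  exact Finset.sum_comm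

/-- The powers of the generator span `L`, and `ℓ (x * y)` is nondegenerate. -/
theorem forall_mul_blockLeftMulMatrix_pow_mul_eq_zero_iff {L : Type} [Field L] [Algebra F L]
    (ℓ : Module.Dual F L) (hℓ : ℓ ≠ 0) (pb : PowerBasis F L) {m n : Type} [Fintype n]
    [DecidableEq n] (U : Matrix m (Fin pb.dim × n) F) (V : Matrix (Fin pb.dim × n) m F) :
    (∀ k : ℕ, U * blockLeftMulMatrix pb.basis n pb.gen ^ k * V = 0) ↔
      rowBlocksEquiv (mulDualBasis ℓ hℓ pb.basis) m n U * colBlocksEquiv pb.basis m n V = 0 := by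
  have h_apply := mul_blockLeftMulMatrix_mul_apply ℓ (dual_mulDualBasis_mul ℓ hℓ pb.basis) U V
  constructor
  · intro h
    ext a c
    refine eq_zero_of_forall_dual_pow_mul ℓ hℓ pb fun k => ?_
    rw [← h_apply, map_pow, h k, Matrix.zero_apply]
  · intro h k
    ext a c
    rw [← map_pow, h_apply, h]
    simp

end BlockPacking

section Counting

theorem Matrix.mul_eq_sum_vecMulVec {R m n o : Type} [CommSemiring R] [Fintype n]
    (P : Matrix m n R) (Q : Matrix n o R) : P * Q = ∑ i, vecMulVec (fun a => P a i) (Q i) := by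
  ext a c
  simp [Matrix.mul_apply, Matrix.sum_apply, vecMulVec_apply]

theorem card_subtype_not_div_card {α : Type} [Finite α] [Nonempty α] (p : α → Prop) :
    (Nat.card {x // ¬ p x} : ℚ) / Nat.card α = 1 - Nat.card {x // p x} / Nat.card α := by
  classical
  have := Fintype.ofFinite α
  simp only [Nat.card_eq_fintype_card]
  rw [Fintype.card_subtype_compl, Nat.cast_sub (Fintype.card_subtype_le _), sub_div,
    div_self (by exact_mod_cast Fintype.card_ne_zero)]

variable (K : Type) [Field K] [Fintype K]

theorem Qzero_eq_card_mul_eq_zero (b t : ℕ) :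
    Qzero K b t = (Nat.card {PQ : Matrix (Fin b) (Fin t) K × Matrix (Fin t) (Fin b) K //
      PQ.1 * PQ.2 = 0} : ℚ) / (Fintype.card K : ℚ) ^ (2 * b * t) := by
  let e : Matrix (Fin b) (Fin t) K × Matrix (Fin t) (Fin b) K ≃
      (Fin t → (Fin b → K) × (Fin b → K)) :=
    { toFun := fun PQ i => (fun a => PQ.1 a i, PQ.2 i)
      invFun := fun w => (of fun a i => (w i).1 a, of fun i => (w i).2)
      left_inv := fun _ => rfl
      right_inv := fun _ => rfl }
  rw [Qzero, Nat.card_congr (e.subtypeEquiv (q := fun w => ∑ i, vecMulVec (w i).1 (w i).2 = 0)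
    fun PQ => by rw [Matrix.mul_eq_sum_vecMulVec]; rfl)]

theorem Qzero_congr {K' : Type} [Field K'] [Fintype K'] (e : K ≃+* K') (b t : ℕ) :
    Qzero K b t = Qzero K' b t := by
  have h_iff (P : Matrix (Fin b) (Fin t) K) (Q : Matrix (Fin t) (Fin b) K) :
      P * Q = 0 ↔ P.map e * Q.map e = 0 := by
    rw [← Matrix.map_mul, ← Matrix.map_zero e (map_zero e)]
    exact (Matrix.map_injective e.injective).eq_iff.symm
  rw [Qzero_eq_card_mul_eq_zero, Qzero_eq_card_mul_eq_zero, Fintype.card_congr e.toEquiv,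
    Nat.card_congr ((e.toEquiv.mapMatrix.prodCongr e.toEquiv.mapMatrix).subtypeEquiv
      (q := fun PQ => PQ.1 * PQ.2 = 0) fun PQ => h_iff PQ.1 PQ.2)]

/-- A nonzero `u vᵀ` determines `v` from `u`, so `(u, v) ↦ (u, 0)` is injective on each
nonzero fibre. -/
theorem card_vecMulVec_eq_le {m : Type} [Fintype m] (M : Matrix m m K) :
    Nat.card {uv : (m → K) × (m → K) // vecMulVec uv.1 uv.2 = M} ≤
      Nat.card {uv : (m → K) × (m → K) // vecMulVec uv.1 uv.2 = 0} := by
  rcases eq_or_ne M 0 with rfl | hM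
  · exact le_rfl
  refine Nat.card_le_card_of_injective (fun uv => ⟨(uv.1.1, 0), by simp⟩) ?_
  rintro ⟨⟨u, v⟩, huv⟩ ⟨⟨u', v'⟩, huv'⟩ h
  obtain rfl : u = u' := congrArg (fun x => x.1.1) h
  obtain ⟨a, ha⟩ : ∃ a, u a ≠ 0 := by
    by_contra! hu
    exact hM (huv ▸ by ext a c; simp [vecMulVec_apply, hu a])
  have hv : v = v' := funext fun c => mul_left_cancel₀ ha <| by
    simpa [vecMulVec_apply] using congrFun (congrFun (huv.trans huv'.symm) a) c
  subst hv
  rfl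

/-- Conditioning on the last `m` summands: the first one must then hit a prescribed value. -/
theorem card_sum_eq_zero_le {X G : Type} [Fintype X] [AddCommGroup G] (g : X → G)
    (hg : ∀ M, Nat.card {x // g x = M} ≤ Nat.card {x // g x = 0}) (m : ℕ) :
    Nat.card {w : Fin (m + 1) → X // ∑ i, g (w i) = 0} ≤
      Nat.card {x // g x = 0} * Fintype.card X ^ m := by
  let e : (Fin (m + 1) → X) ≃ (Fin m → X) × X :=
    (Fin.consEquiv fun _ => X).symm.trans (Equiv.prodComm _ _)
  have h_equiv : {w : Fin (m + 1) → X // ∑ i, g (w i) = 0} ≃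
      Σ τ : Fin m → X, {x // g x = -∑ i, g (τ i)} :=
    (e.subtypeEquiv (q := fun c => g c.2 = -∑ i, g (c.1 i)) fun w => by
      simp [e, Fin.sum_univ_succ, eq_neg_iff_add_eq_zero, Fin.tail]).trans
      (Equiv.subtypeProdEquivSigmaSubtype fun (τ : Fin m → X) x => g x = -∑ i, g (τ i))
  calc Nat.card {w : Fin (m + 1) → X // ∑ i, g (w i) = 0}
      = ∑ τ : Fin m → X, Nat.card {x // g x = -∑ i, g (τ i)} := by
        rw [Nat.card_congr h_equiv, Nat.card_sigma]
    _ ≤ ∑ _τ : Fin m → X, Nat.card {x // g x = 0} := Finset.sum_le_sum fun τ _ => hg _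
    _ = Nat.card {x // g x = 0} * Fintype.card X ^ m := by
        simp [Finset.sum_const, Finset.card_univ, mul_comm]

theorem Qzero_le_Qzero_one (b : ℕ) {t : ℕ} (ht : 0 < t) : Qzero K b t ≤ Qzero K b 1 := by
  obtain ⟨m, rfl⟩ : ∃ m, t = m + 1 := ⟨t - 1, by omega⟩
  have h_one : Nat.card {w : Fin 1 → (Fin b → K) × (Fin b → K) //
      ∑ i, vecMulVec (w i).1 (w i).2 = 0} =
      Nat.card {uv : (Fin b → K) × (Fin b → K) // vecMulVec uv.1 uv.2 = 0} :=
    Nat.card_congr ((Equiv.funUnique (Fin 1) _).subtypeEquiv fun w => by simp)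
  have h_le := card_sum_eq_zero_le (fun uv : (Fin b → K) × (Fin b → K) => vecMulVec uv.1 uv.2)
    (card_vecMulVec_eq_le K) m
  have h_card : Fintype.card ((Fin b → K) × (Fin b → K)) ^ m = Fintype.card K ^ (2 * b * m) := by
    simp [Fintype.card_prod, ← pow_add, ← pow_mul, two_mul]
  rw [h_card] at h_le
  have hK : (0 : ℚ) < Fintype.card K := by exact_mod_cast Fintype.card_pos
  rw [Qzero, Qzero, h_one, div_le_div_iff₀ (by positivity) (by positivity)]
  calc _ ≤ (Nat.card {uv : (Fin b → K) × (Fin b → K) // vecMulVec uv.1 uv.2 = 0} *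
        (Fintype.card K : ℚ) ^ (2 * b * m)) * (Fintype.card K : ℚ) ^ (2 * b * 1) := by
        gcongr
        exact_mod_cast h_le
    _ = _ := by ring

end Counting

theorem pmp_blockLeftMulMatrix_gen {F L : Type} [Field F] [Fintype F] [Field L] [Fintype L]
    [Algebra F L] (pb : PowerBasis F L) (b : ℕ) {s : ℕ} (hs : 0 < s) :
    pmp F b (blockLeftMulMatrix pb.basis (Fin s) pb.gen) = 1 - Qzero L b s := by
  set A := blockLeftMulMatrix pb.basis (Fin s) pb.gen
  have h_int : IsIntegral F pb.gen := pb.isIntegral_gen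
  have h_aeval : aeval A (minpoly F pb.gen) = 0 := by
    rw [aeval_algHom_apply, minpoly.aeval, map_zero]
  have h_iff {α β : Type} (S : ℕ → Matrix α β F) (hS : AnnPoly (minpoly F pb.gen) S) :=
    seqMinpoly_eq_iff_ne_zero (minpoly.monic h_int) (minpoly.irreducible h_int) hS
  have h_pow : seqMinpoly (fun k => A ^ k) = minpoly F pb.gen := by
    have : Nonempty (Fin pb.dim × Fin s) := ⟨(⟨0, pb.dim_pos⟩, ⟨0, hs⟩)⟩
    refine (h_iff _ (annPoly_pow h_aeval)).2 fun h => ?_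
    simpa using congrFun h 0
  obtain ⟨ℓ, hℓ⟩ := exists_ne (0 : Module.Dual F L)
  let e := (rowBlocksEquiv (mulDualBasis ℓ hℓ pb.basis) (Fin b) (Fin s)).prodCongr
    (colBlocksEquiv pb.basis (Fin b) (Fin s))
  have h_good : ∀ UV : Matrix (Fin b) (Fin pb.dim × Fin s) F ×
      Matrix (Fin pb.dim × Fin s) (Fin b) F,
      seqMinpoly (fun k => UV.1 * A ^ k * UV.2) = seqMinpoly (fun k => A ^ k) ↔
        ¬ (e UV).1 * (e UV).2 = 0 := by
    intro UV
    rw [h_pow, h_iff _ (annPoly_mul_pow_mul h_aeval UV.1 UV.2), Ne, funext_iff]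
    exact not_congr (forall_mul_blockLeftMulMatrix_pow_mul_eq_zero_iff ℓ hℓ pb UV.1 UV.2)
  have h_card : Nat.card (Matrix (Fin b) (Fin s) L × Matrix (Fin s) (Fin b) L) =
      Fintype.card L ^ (2 * b * s) := by
    simp only [Matrix, Nat.card_eq_fintype_card, Fintype.card_prod, Fintype.card_pi,
      Finset.prod_const, Finset.card_univ, Fintype.card_fin, ← pow_mul, ← pow_add]
    ring_nf
  rw [pmp, Nat.card_congr (e.subtypeEquiv (q := fun PQ => ¬ PQ.1 * PQ.2 = 0) h_good),
    Nat.card_congr e, card_subtype_not_div_card, Qzero_eq_card_mul_eq_zero, h_card, Nat.cast_pow]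

theorem stmt17_general (F : Type) [Field F] [Fintype F] (b s : ℕ) (hs : 0 < s)
    (f : Polynomial F) (hmonic : f.Monic) (hirr : Irreducible f)
    (d : ℕ) (hd : d = f.natDegree)
    (K : Type) [Field K] [Fintype K] (hK : Fintype.card K = Fintype.card F ^ d) :
    pmp F b (Matrix.blockDiagonal fun _ : Fin s => companion d f) = 1 - Qzero K b s ∧
    1 - Qzero K b 1 ≤
      pmp F b (Matrix.blockDiagonal fun _ : Fin s => companion d f) := by
  subst hd
  have := Fact.mk hirr
  let pb := AdjoinRoot.powerBasis' hmonic
  let := Module.fintypeOfFintype pb.basis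
  have h_minpoly : minpoly F (AdjoinRoot.root f) = f := by
    simpa [hmonic.leadingCoeff] using AdjoinRoot.minpoly_root hirr.ne_zero
  have h_companion : Algebra.leftMulMatrix pb.basis pb.gen = companion f.natDegree f := by
    rw [← companion_minpoly_eq_leftMulMatrix]
    exact congrArg _ h_minpoly
  have h_card : Fintype.card (AdjoinRoot f) = Fintype.card K := by
    rw [Module.card_fintype pb.basis, hK, Fintype.card_fin]
    rfl
  have h_pmp : pmp F b (Matrix.blockDiagonal fun _ : Fin s => companion f.natDegree f) =
      1 - Qzero K b s := by
    rw [← h_companion, ← Qzero_congr _ (FiniteField.ringEquivOfCardEq h_card)]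
    exact pmp_blockLeftMulMatrix_gen pb b hs
  exact ⟨h_pmp, h_pmp ▸ sub_le_sub_left (Qzero_le_Qzero_one K b hs) 1⟩

/-- For `A = ⊕_{i=1}^s C_f` with `f` monic irreducible of degree `d` over `F_q`:
`P(A) = 1 - Q_{q^d,b,s}(0) ≥ 1 - Q_{q^d,b,1}(0)`, where `K` is the field with
`q^d` elements. -/
theorem stmt17 (F : Type) [Field F] [Fintype F] (b s : ℕ) (hb : 0 < b) (hs : 0 < s)
    (f : Polynomial F) (hmonic : f.Monic) (hirr : Irreducible f)
    (d : ℕ) (hd : d = f.natDegree)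
    (K : Type) [Field K] [Fintype K] (hK : Fintype.card K = Fintype.card F ^ d) :
    pmp F b (Matrix.blockDiagonal fun _ : Fin s => companion d f) = 1 - Qzero K b s ∧
    1 - Qzero K b 1 ≤
      pmp F b (Matrix.blockDiagonal fun _ : Fin s => companion d f) :=
  stmt17_general F b s hs f hmonic hirr d hd K hK
end
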